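/- Let α_1, …, α_n be an obtuse basis of V whose Gram graph is connected, and let λ_1, …, λ_n be a positive dual family for α. Then for every index i and every nonempty subset S ⊆ {1, …, n} ∖ {i}, the orthogonal projection of λ_i onto the linear span of {λ_s : s ∈ S} is nonzero. -/

import Mathlib

open RealInnerProductSpace

/-- If `α` is an obtuse basis and `⟪v, α j⟫ ≥ 0` for all `j`, then all coordinates of `v`
in the basis `α` are nonnegative. -/
lemma repr_nonneg_of_obtuse {V : Type*} [NormedAddCommGroup V] [InnerProductSpace ℝ V]
    {n : ℕ} (α : Module.Basis (Fin n) ℝ V)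
    (hobtuse : ∀ i j : Fin n, i ≠ j → ⟪α i, α j⟫ ≤ 0)
    (v : V) (hv : ∀ j, 0 ≤ ⟪v, α j⟫) (k : Fin n) : 0 ≤ α.repr v k := by
  set c : Fin n → ℝ := fun k => α.repr v k with hc
  set cp : Fin n → ℝ := fun k => max (c k) 0 with hcp
  set cm : Fin n → ℝ := fun k => max (-(c k)) 0 with hcm
  have hcpm : ∀ k, cp k - cm k = c k := fun k => max_zero_sub_max_neg_zero_eq_self (c k)
  have hcp0 : ∀ k, 0 ≤ cp k := fun k => le_max_right _ _
  have hcm0 : ∀ k, 0 ≤ cm k := fun k => le_max_right _ _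
  have hmul : ∀ k, cp k * cm k = 0 := by
    intro k
    rcases le_total (c k) 0 with h | h
    · have : cp k = 0 := max_eq_right h
      rw [this, zero_mul]
    · have : cm k = 0 := max_eq_right (neg_nonpos_of_nonneg h)
      rw [this, mul_zero]
  set vp : V := ∑ k, cp k • α k with hvp
  set vm : V := ∑ k, cm k • α k with hvm
  have hveq : v = vp - vm := by
    rw [hvp, hvm, ← Finset.sum_sub_distrib]
    have : ∀ k ∈ Finset.univ, cp k • α k - cm k • α k = c k • α k := by
      intro k _
      rw [← sub_smul, hcpm]
    rw [Finset.sum_congr rfl this]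
    exact (α.sum_repr v).symm
  have hvpm : ⟪vp, vm⟫ ≤ 0 := by
    rw [hvp, sum_inner]
    apply Finset.sum_nonpos
    intro j _
    rw [hvm, inner_sum]
    apply Finset.sum_nonpos
    intro k _
    rw [real_inner_smul_left, real_inner_smul_right]
    rcases eq_or_ne j k with rfl | hjk
    · rw [← mul_assoc, hmul, zero_mul]
    · exact mul_nonpos_of_nonneg_of_nonpos (hcp0 j)
        (mul_nonpos_of_nonneg_of_nonpos (hcm0 k) (hobtuse j k hjk))
  have hvvm : 0 ≤ ⟪v, vm⟫ := by
    rw [hvm, inner_sum]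
    apply Finset.sum_nonneg
    intro k _
    rw [real_inner_smul_right]
    exact mul_nonneg (hcm0 k) (hv k)
  have hvm0 : vm = 0 := by
    have h1 : ⟪vm, vm⟫ = ⟪vp, vm⟫ - ⟪v, vm⟫ := by
      rw [hveq, inner_sub_left]
      ring
    have h2 : ⟪vm, vm⟫ ≤ 0 := by
      rw [h1]; linarith
    have h3 : (0:ℝ) ≤ ⟪vm, vm⟫ := real_inner_self_nonneg
    have : ⟪vm, vm⟫ = (0:ℝ) := le_antisymm h2 h3
    exact inner_self_eq_zero.mp this
  have hcmk : cm k = 0 := by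
    have h1 : ⇑(α.repr vm) = cm := by rw [hvm]; exact α.repr_sum_self cm
    have h2 : cm k = α.repr vm k := by rw [h1]
    rw [h2, hvm0]; simp
  have h4 : -(c k) ≤ 0 := by
    calc -(c k) ≤ max (-(c k)) 0 := le_max_left _ _
    _ = cm k := rfl
    _ = 0 := hcmk
  linarith

/-- Let `α` be an obtuse basis of a real inner product space with
connected Gram graph, and `λ` a positive dual family for `α`.  Then for every
index `i` and every nonempty `S ⊆ {1, …, n} ∖ {i}`, the orthogonal projection of
`λ_i` onto the span of `{λ_s : s ∈ S}` is nonzero. -/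
theorem orthogonalProjection_ne_zero_of_positive_dual_family
    {V : Type*} [NormedAddCommGroup V] [InnerProductSpace ℝ V]
    [FiniteDimensional ℝ V]
    (n : ℕ) (hn : 1 ≤ n) (hdim : Module.finrank ℝ V = n)
    (α : Module.Basis (Fin n) ℝ V)
    (hobtuse : ∀ i j : Fin n, i ≠ j → ⟪α i, α j⟫ ≤ 0)
    (hconn : (SimpleGraph.fromRel fun i j : Fin n => ⟪α i, α j⟫ < 0).Connected)
    (lam : Fin n → V)
    (hdual_orth : ∀ i j : Fin n, i ≠ j → ⟪lam i, α j⟫ = 0)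
    (hdual_pos : ∀ i : Fin n, 0 < ⟪lam i, α i⟫)
    (i : Fin n) (S : Set (Fin n)) (hS : S.Nonempty) (hiS : i ∉ S) :
    Submodule.orthogonalProjection (Submodule.span ℝ (lam '' S)) (lam i) ≠ 0 := by
  classical
  set c : Fin n → Fin n → ℝ := fun j k => α.repr (lam j) k with hc
  -- all coordinates of `lam j` are nonnegative
  have hcnonneg : ∀ j k, 0 ≤ c j k := by
    intro j k
    apply repr_nonneg_of_obtuse α hobtuse
    intro m
    rcases eq_or_ne j m with rfl | hjm
    · exact (hdual_pos j).le
    · exact (hdual_orth j m hjm).ge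
  have hlamsum : ∀ j, lam j = ∑ k, c j k • α k := fun j => (α.sum_repr (lam j)).symm
  -- inner products ⟪lam j, lam m⟫ = c m j * ⟪lam j, α j⟫
  have hinner : ∀ j m, ⟪lam j, lam m⟫ = c m j * ⟪lam j, α j⟫ := by
    intro j m
    conv_lhs => rw [hlamsum m, inner_sum]
    rw [Finset.sum_eq_single j]
    · rw [real_inner_smul_right]
    · intro k _ hk
      rw [real_inner_smul_right, hdual_orth j k (Ne.symm hk), mul_zero]
    · intro h; exact absurd (Finset.mem_univ j) h
  -- diagonal coordinates are positive
  have hlam_ne : ∀ j, lam j ≠ 0 := by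
    intro j h
    have := hdual_pos j
    rw [h] at this
    simp at this
  have hdiag : ∀ j, 0 < c j j := by
    intro j
    have h1 : (0:ℝ) < ⟪lam j, lam j⟫ :=
      lt_of_le_of_ne real_inner_self_nonneg
        (fun h => hlam_ne j (inner_self_eq_zero.mp h.symm))
    rw [hinner j j] at h1
    nlinarith [hdual_pos j, hcnonneg j j]
  -- all coordinates are positive, by connectedness of the Gram graph
  have hpos : ∀ j k, 0 < c j k := by
    intro j k
    have hstep : ∀ a b : Fin n,
        (SimpleGraph.fromRel fun i j : Fin n => ⟪α i, α j⟫ < 0).Adj a b →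
        0 < c j a → 0 < c j b := by
      intro a b hab hca
      obtain ⟨hne, hrel⟩ := hab
      have hab' : ⟪α a, α b⟫ < 0 := by
        rcases hrel with h | h
        · exact h
        · rwa [real_inner_comm]
      by_contra hcb
      have hcb0 : c j b = 0 := le_antisymm (not_lt.mp hcb) (hcnonneg j b)
      have hbj : b ≠ j := by
        intro h; rw [h] at hcb0; exact absurd hcb0 (hdiag j).ne'
      have hsum : ∑ k, c j k * ⟪α k, α b⟫ = 0 := by
        have : ⟪lam j, α b⟫ = 0 := hdual_orth j b (Ne.symm hbj)
        rw [← this]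
        conv_rhs => rw [hlamsum j, sum_inner]
        apply Finset.sum_congr rfl
        intro k _
        rw [real_inner_smul_left]
      have hterms : ∀ k ∈ Finset.univ, c j k * ⟪α k, α b⟫ ≤ 0 := by
        intro k _
        rcases eq_or_ne k b with rfl | hkb
        · rw [hcb0, zero_mul]
        · exact mul_nonpos_of_nonneg_of_nonpos (hcnonneg j k) (hobtuse k b hkb)
      have hzero := (Finset.sum_eq_zero_iff_of_nonpos hterms).mp hsum a (Finset.mem_univ a)
      nlinarith
    have key : ∀ {a b : Fin n}
        (p : (SimpleGraph.fromRel fun i j : Fin n => ⟪α i, α j⟫ < 0).Walk a b),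
        0 < c j a → 0 < c j b := by
      intro a b p
      induction p with
      | nil => exact id
      | cons h p ih => exact fun ha => ih (hstep _ _ h ha)
    exact ((hconn.preconnected j k).elim fun p => key p (hdiag j))
  -- conclusion
  intro h0
  obtain ⟨s, hsS⟩ := hS
  have hmem : lam i ∈ (Submodule.span ℝ (lam '' S))ᗮ :=
    Submodule.orthogonalProjectionOnto_eq_zero_iff.mp h0
  have hls : lam s ∈ Submodule.span ℝ (lam '' S) :=
    Submodule.subset_span ⟨s, hsS, rfl⟩
  have hzero : ⟪lam s, lam i⟫ = 0 :=
    (Submodule.mem_orthogonal _ _).mp hmem (lam s) hls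
  rw [hinner s i] at hzero
  nlinarith [hpos i s, hdual_pos s]
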